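/- The normal closure of the element w in Γ₁ equals Λ₁; equivalently, the quotient of Γ₁ by the normal closure of w has exactly 4 elements. -/

import Mathlib

/- Generators: `Gen.a i` is the generator a(i+1), `Gen.b i` is b(i+1) of the paper. -/
inductive Gen : Type
  | a : Fin 5 → Gen
  | b : Fin 5 → Gen

/-- The letter aᵢ₊₁ viewed in the free group. -/
def ga (i : Fin 5) : FreeGroup Gen := FreeGroup.of (Gen.a i)

/-- The letter bᵢ₊₁ viewed in the free group. -/
def gb (i : Fin 5) : FreeGroup Gen := FreeGroup.of (Gen.b i)

/-- The 25 relators. -/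
def rels : Set (FreeGroup Gen) :=
  { ga 0 * gb 0 * (ga 1)⁻¹ * (gb 1)⁻¹,
    ga 0 * gb 1 * (ga 0)⁻¹ * (gb 0)⁻¹,
    ga 0 * gb 2 * (ga 1)⁻¹ * (gb 2)⁻¹,
    ga 0 * (gb 2)⁻¹ * (ga 1)⁻¹ * gb 1,
    ga 0 * (gb 0)⁻¹ * (ga 1)⁻¹ * gb 2,
    ga 1 * gb 1 * (ga 1)⁻¹ * (gb 0)⁻¹,
    ga 2 * gb 0 * (ga 3)⁻¹ * (gb 1)⁻¹,
    ga 2 * gb 1 * (ga 2)⁻¹ * (gb 0)⁻¹,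
    ga 2 * gb 2 * (ga 3)⁻¹ * (gb 2)⁻¹,
    ga 2 * (gb 2)⁻¹ * (ga 3)⁻¹ * gb 1,
    ga 2 * (gb 0)⁻¹ * (ga 3)⁻¹ * gb 2,
    ga 3 * gb 1 * (ga 3)⁻¹ * (gb 0)⁻¹,
    ga 0 * gb 3 * ga 1 * (gb 4)⁻¹,
    ga 0 * gb 4 * (ga 4)⁻¹ * gb 3,
    ga 0 * (gb 4)⁻¹ * ga 2 * (gb 3)⁻¹,
    ga 0 * (gb 3)⁻¹ * ga 2 * gb 4,
    ga 1 * gb 3 * (ga 1)⁻¹ * gb 4,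
    ga 1 * gb 4 * ga 3 * (gb 3)⁻¹,
    ga 2 * gb 3 * ga 3 * gb 4,
    ga 2 * (gb 4)⁻¹ * ga 3 * gb 3,
    ga 3 * (gb 4)⁻¹ * (ga 4)⁻¹ * (gb 3)⁻¹,
    ga 4 * gb 0 * (ga 4)⁻¹ * gb 2,
    ga 4 * gb 1 * (ga 4)⁻¹ * (gb 4)⁻¹,
    ga 4 * gb 2 * (ga 4)⁻¹ * (gb 0)⁻¹,
    ga 4 * gb 3 * (ga 4)⁻¹ * (gb 1)⁻¹ }

/-- The presented group. -/
abbrev G : Type := PresentedGroup rels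

/-- The image of the generator aᵢ₊₁ in the presented group. -/
def γa (i : Fin 5) : G := PresentedGroup.of (Gen.a i)

/-- The image of the generator bᵢ₊₁ in the presented group. -/
def γb (i : Fin 5) : G := PresentedGroup.of (Gen.b i)

/-- Target values of the homomorphism: each aⱼ ↦ (1,0), each bⱼ ↦ (0,1). -/
def fgen : Gen → Multiplicative (ZMod 2 × ZMod 2)
  | .a _ => Multiplicative.ofAdd (1, 0)
  | .b _ => Multiplicative.ofAdd (0, 1)

lemma fgen_rels : ∀ r ∈ rels, FreeGroup.lift fgen r = 1 := by
  intro r hr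
  simp only [rels, Set.mem_insert_iff, Set.mem_singleton_iff] at hr
  rcases hr with rfl|rfl|rfl|rfl|rfl|rfl|rfl|rfl|rfl|rfl|rfl|rfl|rfl|rfl|rfl|rfl|rfl|rfl|rfl|rfl|rfl|rfl|rfl|rfl|rfl <;>
    simp only [ga, gb, map_mul, map_inv, FreeGroup.lift_apply_of] <;> decide

/-- The homomorphism φ. -/
def φ : G →* Multiplicative (ZMod 2 × ZMod 2) := PresentedGroup.toGroup fgen_rels

/-- Λ is the kernel of φ. -/
def Λ : Subgroup G := φ.ker

/-- The element w = a₂·a₁⁻¹·a₃·a₄⁻¹. -/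
def w : G := γa 1 * (γa 0)⁻¹ * γa 2 * (γa 3)⁻¹


deriving instance DecidableEq for Gen

namespace NC1

/-- The normal closure of w. -/
abbrev N : Subgroup G := Subgroup.normalClosure {w}

/-- Composite map from the free group to the quotient G ⧸ N. -/
def μ : FreeGroup Gen →* G ⧸ N := (QuotientGroup.mk' N).comp (PresentedGroup.mk rels)

lemma hrel {r : FreeGroup Gen} (h : r ∈ rels) : μ r = 1 := by
  have : PresentedGroup.mk rels r = 1 :=
    (QuotientGroup.eq_one_iff r).2 (Subgroup.subset_normalClosure h)
  simp [μ, this]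

lemma mk_wF : PresentedGroup.mk rels (ga 1 * (ga 0)⁻¹ * ga 2 * (ga 3)⁻¹) = w := by
  simp only [w, γa, ga, PresentedGroup.of, map_mul, map_inv]

lemma hw : μ (ga 1 * (ga 0)⁻¹ * ga 2 * (ga 3)⁻¹) = 1 := by
  have : μ (ga 1 * (ga 0)⁻¹ * ga 2 * (ga 3)⁻¹) = QuotientGroup.mk' N w := by
    rw [μ, MonoidHom.comp_apply, mk_wF]
  rw [this]
  exact (QuotientGroup.eq_one_iff w).2 (Subgroup.subset_normalClosure rfl)

lemma mul1 {x y : FreeGroup Gen} (hx : μ x = 1) (hy : μ y = 1) : μ (x * y) = 1 := by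
  rw [map_mul, hx, hy, one_mul]

lemma inv1 {x : FreeGroup Gen} (hx : μ x = 1) : μ x⁻¹ = 1 := by
  rw [map_inv, hx, inv_one]

lemma conj1 (u : FreeGroup Gen) {x : FreeGroup Gen} (hx : μ x = 1) : μ (u * x * u⁻¹) = 1 := by
  rw [map_mul, map_mul, map_inv, hx, mul_one, mul_inv_cancel]

lemma hr0 : μ (ga 0 * gb 0 * (ga 1)⁻¹ * (gb 1)⁻¹) = 1 := hrel (Set.mem_insert _ _)
lemma hr1 : μ (ga 0 * gb 1 * (ga 0)⁻¹ * (gb 0)⁻¹) = 1 := hrel (Set.mem_insert_of_mem _ (Set.mem_insert _ _))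
lemma hr2 : μ (ga 0 * gb 2 * (ga 1)⁻¹ * (gb 2)⁻¹) = 1 := hrel (Set.mem_insert_of_mem _ (Set.mem_insert_of_mem _ (Set.mem_insert _ _)))
lemma hr3 : μ (ga 0 * (gb 2)⁻¹ * (ga 1)⁻¹ * gb 1) = 1 := hrel (Set.mem_insert_of_mem _ (Set.mem_insert_of_mem _ (Set.mem_insert_of_mem _ (Set.mem_insert _ _))))
lemma hr4 : μ (ga 0 * (gb 0)⁻¹ * (ga 1)⁻¹ * gb 2) = 1 := hrel (Set.mem_insert_of_mem _ (Set.mem_insert_of_mem _ (Set.mem_insert_of_mem _ (Set.mem_insert_of_mem _ (Set.mem_insert _ _)))))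
lemma hr5 : μ (ga 1 * gb 1 * (ga 1)⁻¹ * (gb 0)⁻¹) = 1 := hrel (Set.mem_insert_of_mem _ (Set.mem_insert_of_mem _ (Set.mem_insert_of_mem _ (Set.mem_insert_of_mem _ (Set.mem_insert_of_mem _ (Set.mem_insert _ _))))))
lemma hr6 : μ (ga 2 * gb 0 * (ga 3)⁻¹ * (gb 1)⁻¹) = 1 := hrel (Set.mem_insert_of_mem _ (Set.mem_insert_of_mem _ (Set.mem_insert_of_mem _ (Set.mem_insert_of_mem _ (Set.mem_insert_of_mem _ (Set.mem_insert_of_mem _ (Set.mem_insert _ _)))))))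
lemma hr7 : μ (ga 2 * gb 1 * (ga 2)⁻¹ * (gb 0)⁻¹) = 1 := hrel (Set.mem_insert_of_mem _ (Set.mem_insert_of_mem _ (Set.mem_insert_of_mem _ (Set.mem_insert_of_mem _ (Set.mem_insert_of_mem _ (Set.mem_insert_of_mem _ (Set.mem_insert_of_mem _ (Set.mem_insert _ _))))))))
lemma hr8 : μ (ga 2 * gb 2 * (ga 3)⁻¹ * (gb 2)⁻¹) = 1 := hrel (Set.mem_insert_of_mem _ (Set.mem_insert_of_mem _ (Set.mem_insert_of_mem _ (Set.mem_insert_of_mem _ (Set.mem_insert_of_mem _ (Set.mem_insert_of_mem _ (Set.mem_insert_of_mem _ (Set.mem_insert_of_mem _ (Set.mem_insert _ _)))))))))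
lemma hr9 : μ (ga 2 * (gb 2)⁻¹ * (ga 3)⁻¹ * gb 1) = 1 := hrel (Set.mem_insert_of_mem _ (Set.mem_insert_of_mem _ (Set.mem_insert_of_mem _ (Set.mem_insert_of_mem _ (Set.mem_insert_of_mem _ (Set.mem_insert_of_mem _ (Set.mem_insert_of_mem _ (Set.mem_insert_of_mem _ (Set.mem_insert_of_mem _ (Set.mem_insert _ _))))))))))
lemma hr10 : μ (ga 2 * (gb 0)⁻¹ * (ga 3)⁻¹ * gb 2) = 1 := hrel (Set.mem_insert_of_mem _ (Set.mem_insert_of_mem _ (Set.mem_insert_of_mem _ (Set.mem_insert_of_mem _ (Set.mem_insert_of_mem _ (Set.mem_insert_of_mem _ (Set.mem_insert_of_mem _ (Set.mem_insert_of_mem _ (Set.mem_insert_of_mem _ (Set.mem_insert_of_mem _ (Set.mem_insert _ _)))))))))))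
lemma hr11 : μ (ga 3 * gb 1 * (ga 3)⁻¹ * (gb 0)⁻¹) = 1 := hrel (Set.mem_insert_of_mem _ (Set.mem_insert_of_mem _ (Set.mem_insert_of_mem _ (Set.mem_insert_of_mem _ (Set.mem_insert_of_mem _ (Set.mem_insert_of_mem _ (Set.mem_insert_of_mem _ (Set.mem_insert_of_mem _ (Set.mem_insert_of_mem _ (Set.mem_insert_of_mem _ (Set.mem_insert_of_mem _ (Set.mem_insert _ _))))))))))))
lemma hr12 : μ (ga 0 * gb 3 * ga 1 * (gb 4)⁻¹) = 1 := hrel (Set.mem_insert_of_mem _ (Set.mem_insert_of_mem _ (Set.mem_insert_of_mem _ (Set.mem_insert_of_mem _ (Set.mem_insert_of_mem _ (Set.mem_insert_of_mem _ (Set.mem_insert_of_mem _ (Set.mem_insert_of_mem _ (Set.mem_insert_of_mem _ (Set.mem_insert_of_mem _ (Set.mem_insert_of_mem _ (Set.mem_insert_of_mem _ (Set.mem_insert _ _)))))))))))))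
lemma hr13 : μ (ga 0 * gb 4 * (ga 4)⁻¹ * gb 3) = 1 := hrel (Set.mem_insert_of_mem _ (Set.mem_insert_of_mem _ (Set.mem_insert_of_mem _ (Set.mem_insert_of_mem _ (Set.mem_insert_of_mem _ (Set.mem_insert_of_mem _ (Set.mem_insert_of_mem _ (Set.mem_insert_of_mem _ (Set.mem_insert_of_mem _ (Set.mem_insert_of_mem _ (Set.mem_insert_of_mem _ (Set.mem_insert_of_mem _ (Set.mem_insert_of_mem _ (Set.mem_insert _ _))))))))))))))
lemma hr14 : μ (ga 0 * (gb 4)⁻¹ * ga 2 * (gb 3)⁻¹) = 1 := hrel (Set.mem_insert_of_mem _ (Set.mem_insert_of_mem _ (Set.mem_insert_of_mem _ (Set.mem_insert_of_mem _ (Set.mem_insert_of_mem _ (Set.mem_insert_of_mem _ (Set.mem_insert_of_mem _ (Set.mem_insert_of_mem _ (Set.mem_insert_of_mem _ (Set.mem_insert_of_mem _ (Set.mem_insert_of_mem _ (Set.mem_insert_of_mem _ (Set.mem_insert_of_mem _ (Set.mem_insert_of_mem _ (Set.mem_insert _ _)))))))))))))))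
lemma hr15 : μ (ga 0 * (gb 3)⁻¹ * ga 2 * gb 4) = 1 := hrel (Set.mem_insert_of_mem _ (Set.mem_insert_of_mem _ (Set.mem_insert_of_mem _ (Set.mem_insert_of_mem _ (Set.mem_insert_of_mem _ (Set.mem_insert_of_mem _ (Set.mem_insert_of_mem _ (Set.mem_insert_of_mem _ (Set.mem_insert_of_mem _ (Set.mem_insert_of_mem _ (Set.mem_insert_of_mem _ (Set.mem_insert_of_mem _ (Set.mem_insert_of_mem _ (Set.mem_insert_of_mem _ (Set.mem_insert_of_mem _ (Set.mem_insert _ _))))))))))))))))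
lemma hr16 : μ (ga 1 * gb 3 * (ga 1)⁻¹ * gb 4) = 1 := hrel (Set.mem_insert_of_mem _ (Set.mem_insert_of_mem _ (Set.mem_insert_of_mem _ (Set.mem_insert_of_mem _ (Set.mem_insert_of_mem _ (Set.mem_insert_of_mem _ (Set.mem_insert_of_mem _ (Set.mem_insert_of_mem _ (Set.mem_insert_of_mem _ (Set.mem_insert_of_mem _ (Set.mem_insert_of_mem _ (Set.mem_insert_of_mem _ (Set.mem_insert_of_mem _ (Set.mem_insert_of_mem _ (Set.mem_insert_of_mem _ (Set.mem_insert_of_mem _ (Set.mem_insert _ _)))))))))))))))))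
lemma hr17 : μ (ga 1 * gb 4 * ga 3 * (gb 3)⁻¹) = 1 := hrel (Set.mem_insert_of_mem _ (Set.mem_insert_of_mem _ (Set.mem_insert_of_mem _ (Set.mem_insert_of_mem _ (Set.mem_insert_of_mem _ (Set.mem_insert_of_mem _ (Set.mem_insert_of_mem _ (Set.mem_insert_of_mem _ (Set.mem_insert_of_mem _ (Set.mem_insert_of_mem _ (Set.mem_insert_of_mem _ (Set.mem_insert_of_mem _ (Set.mem_insert_of_mem _ (Set.mem_insert_of_mem _ (Set.mem_insert_of_mem _ (Set.mem_insert_of_mem _ (Set.mem_insert_of_mem _ (Set.mem_insert _ _))))))))))))))))))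
lemma hr18 : μ (ga 2 * gb 3 * ga 3 * gb 4) = 1 := hrel (Set.mem_insert_of_mem _ (Set.mem_insert_of_mem _ (Set.mem_insert_of_mem _ (Set.mem_insert_of_mem _ (Set.mem_insert_of_mem _ (Set.mem_insert_of_mem _ (Set.mem_insert_of_mem _ (Set.mem_insert_of_mem _ (Set.mem_insert_of_mem _ (Set.mem_insert_of_mem _ (Set.mem_insert_of_mem _ (Set.mem_insert_of_mem _ (Set.mem_insert_of_mem _ (Set.mem_insert_of_mem _ (Set.mem_insert_of_mem _ (Set.mem_insert_of_mem _ (Set.mem_insert_of_mem _ (Set.mem_insert_of_mem _ (Set.mem_insert _ _)))))))))))))))))))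
lemma hr19 : μ (ga 2 * (gb 4)⁻¹ * ga 3 * gb 3) = 1 := hrel (Set.mem_insert_of_mem _ (Set.mem_insert_of_mem _ (Set.mem_insert_of_mem _ (Set.mem_insert_of_mem _ (Set.mem_insert_of_mem _ (Set.mem_insert_of_mem _ (Set.mem_insert_of_mem _ (Set.mem_insert_of_mem _ (Set.mem_insert_of_mem _ (Set.mem_insert_of_mem _ (Set.mem_insert_of_mem _ (Set.mem_insert_of_mem _ (Set.mem_insert_of_mem _ (Set.mem_insert_of_mem _ (Set.mem_insert_of_mem _ (Set.mem_insert_of_mem _ (Set.mem_insert_of_mem _ (Set.mem_insert_of_mem _ (Set.mem_insert_of_mem _ (Set.mem_insert _ _))))))))))))))))))))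
lemma hr20 : μ (ga 3 * (gb 4)⁻¹ * (ga 4)⁻¹ * (gb 3)⁻¹) = 1 := hrel (Set.mem_insert_of_mem _ (Set.mem_insert_of_mem _ (Set.mem_insert_of_mem _ (Set.mem_insert_of_mem _ (Set.mem_insert_of_mem _ (Set.mem_insert_of_mem _ (Set.mem_insert_of_mem _ (Set.mem_insert_of_mem _ (Set.mem_insert_of_mem _ (Set.mem_insert_of_mem _ (Set.mem_insert_of_mem _ (Set.mem_insert_of_mem _ (Set.mem_insert_of_mem _ (Set.mem_insert_of_mem _ (Set.mem_insert_of_mem _ (Set.mem_insert_of_mem _ (Set.mem_insert_of_mem _ (Set.mem_insert_of_mem _ (Set.mem_insert_of_mem _ (Set.mem_insert_of_mem _ (Set.mem_insert _ _)))))))))))))))))))))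
lemma hr21 : μ (ga 4 * gb 0 * (ga 4)⁻¹ * gb 2) = 1 := hrel (Set.mem_insert_of_mem _ (Set.mem_insert_of_mem _ (Set.mem_insert_of_mem _ (Set.mem_insert_of_mem _ (Set.mem_insert_of_mem _ (Set.mem_insert_of_mem _ (Set.mem_insert_of_mem _ (Set.mem_insert_of_mem _ (Set.mem_insert_of_mem _ (Set.mem_insert_of_mem _ (Set.mem_insert_of_mem _ (Set.mem_insert_of_mem _ (Set.mem_insert_of_mem _ (Set.mem_insert_of_mem _ (Set.mem_insert_of_mem _ (Set.mem_insert_of_mem _ (Set.mem_insert_of_mem _ (Set.mem_insert_of_mem _ (Set.mem_insert_of_mem _ (Set.mem_insert_of_mem _ (Set.mem_insert_of_mem _ (Set.mem_insert _ _))))))))))))))))))))))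
lemma hr22 : μ (ga 4 * gb 1 * (ga 4)⁻¹ * (gb 4)⁻¹) = 1 := hrel (Set.mem_insert_of_mem _ (Set.mem_insert_of_mem _ (Set.mem_insert_of_mem _ (Set.mem_insert_of_mem _ (Set.mem_insert_of_mem _ (Set.mem_insert_of_mem _ (Set.mem_insert_of_mem _ (Set.mem_insert_of_mem _ (Set.mem_insert_of_mem _ (Set.mem_insert_of_mem _ (Set.mem_insert_of_mem _ (Set.mem_insert_of_mem _ (Set.mem_insert_of_mem _ (Set.mem_insert_of_mem _ (Set.mem_insert_of_mem _ (Set.mem_insert_of_mem _ (Set.mem_insert_of_mem _ (Set.mem_insert_of_mem _ (Set.mem_insert_of_mem _ (Set.mem_insert_of_mem _ (Set.mem_insert_of_mem _ (Set.mem_insert_of_mem _ (Set.mem_insert _ _)))))))))))))))))))))))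
lemma hr23 : μ (ga 4 * gb 2 * (ga 4)⁻¹ * (gb 0)⁻¹) = 1 := hrel (Set.mem_insert_of_mem _ (Set.mem_insert_of_mem _ (Set.mem_insert_of_mem _ (Set.mem_insert_of_mem _ (Set.mem_insert_of_mem _ (Set.mem_insert_of_mem _ (Set.mem_insert_of_mem _ (Set.mem_insert_of_mem _ (Set.mem_insert_of_mem _ (Set.mem_insert_of_mem _ (Set.mem_insert_of_mem _ (Set.mem_insert_of_mem _ (Set.mem_insert_of_mem _ (Set.mem_insert_of_mem _ (Set.mem_insert_of_mem _ (Set.mem_insert_of_mem _ (Set.mem_insert_of_mem _ (Set.mem_insert_of_mem _ (Set.mem_insert_of_mem _ (Set.mem_insert_of_mem _ (Set.mem_insert_of_mem _ (Set.mem_insert_of_mem _ (Set.mem_insert_of_mem _ (Set.mem_insert _ _))))))))))))))))))))))))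
lemma hr24 : μ (ga 4 * gb 3 * (ga 4)⁻¹ * (gb 1)⁻¹) = 1 := hrel (Set.mem_insert_of_mem _ (Set.mem_insert_of_mem _ (Set.mem_insert_of_mem _ (Set.mem_insert_of_mem _ (Set.mem_insert_of_mem _ (Set.mem_insert_of_mem _ (Set.mem_insert_of_mem _ (Set.mem_insert_of_mem _ (Set.mem_insert_of_mem _ (Set.mem_insert_of_mem _ (Set.mem_insert_of_mem _ (Set.mem_insert_of_mem _ (Set.mem_insert_of_mem _ (Set.mem_insert_of_mem _ (Set.mem_insert_of_mem _ (Set.mem_insert_of_mem _ (Set.mem_insert_of_mem _ (Set.mem_insert_of_mem _ (Set.mem_insert_of_mem _ (Set.mem_insert_of_mem _ (Set.mem_insert_of_mem _ (Set.mem_insert_of_mem _ (Set.mem_insert_of_mem _ (Set.mem_insert_of_mem _ (rfl)))))))))))))))))))))))))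
lemma hr25 : μ (ga 1 * (ga 0)⁻¹ * ga 2 * (ga 3)⁻¹) = 1 := hw
lemma e2 : μ (1 : FreeGroup Gen) = 1 := map_one μ
lemma e4 : μ (1 : FreeGroup Gen) = 1 := map_one μ
lemma e6 : μ (1 : FreeGroup Gen) = 1 := map_one μ
lemma e8 : μ (1 : FreeGroup Gen) = 1 := map_one μ
lemma e10 : μ (1 : FreeGroup Gen) = 1 := map_one μ
lemma e14 : μ (1 : FreeGroup Gen) = 1 := map_one μ
lemma e16 : μ (1 : FreeGroup Gen) = 1 := map_one μ
lemma e20 : μ (ga 0 * gb 0 * (ga 1)⁻¹ * (gb 1)⁻¹) = 1 := by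
  have e : (ga 0 * gb 0 * (ga 1)⁻¹ * (gb 1)⁻¹) = ((ga 0 * gb 0 * (ga 1)⁻¹ * (gb 1)⁻¹)) := by decide
  rw [e]; exact (hr0)
lemma e21 : μ (ga 0 * gb 1 * (ga 0)⁻¹ * (gb 0)⁻¹) = 1 := by
  have e : (ga 0 * gb 1 * (ga 0)⁻¹ * (gb 0)⁻¹) = ((ga 0 * gb 1 * (ga 0)⁻¹ * (gb 0)⁻¹)) := by decide
  rw [e]; exact (hr1)
lemma e23 : μ (ga 0 * (gb 2)⁻¹ * (ga 1)⁻¹ * gb 1) = 1 := by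
  have e : (ga 0 * (gb 2)⁻¹ * (ga 1)⁻¹ * gb 1) = ((ga 0 * (gb 2)⁻¹ * (ga 1)⁻¹ * gb 1)) := by decide
  rw [e]; exact (hr3)
lemma e26 : μ (ga 2 * gb 0 * (ga 3)⁻¹ * (gb 1)⁻¹) = 1 := by
  have e : (ga 2 * gb 0 * (ga 3)⁻¹ * (gb 1)⁻¹) = ((ga 2 * gb 0 * (ga 3)⁻¹ * (gb 1)⁻¹)) := by decide
  rw [e]; exact (hr6)
lemma e27 : μ (ga 2 * gb 1 * (ga 2)⁻¹ * (gb 0)⁻¹) = 1 := by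
  have e : (ga 2 * gb 1 * (ga 2)⁻¹ * (gb 0)⁻¹) = ((ga 2 * gb 1 * (ga 2)⁻¹ * (gb 0)⁻¹)) := by decide
  rw [e]; exact (hr7)
lemma e29 : μ (ga 2 * (gb 2)⁻¹ * (ga 3)⁻¹ * gb 1) = 1 := by
  have e : (ga 2 * (gb 2)⁻¹ * (ga 3)⁻¹ * gb 1) = ((ga 2 * (gb 2)⁻¹ * (ga 3)⁻¹ * gb 1)) := by decide
  rw [e]; exact (hr9)
lemma e30 : μ (ga 2 * (gb 0)⁻¹ * (ga 3)⁻¹ * gb 2) = 1 := by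
  have e : (ga 2 * (gb 0)⁻¹ * (ga 3)⁻¹ * gb 2) = ((ga 2 * (gb 0)⁻¹ * (ga 3)⁻¹ * gb 2)) := by decide
  rw [e]; exact (hr10)
lemma e32 : μ (ga 0 * gb 3 * ga 1 * (gb 4)⁻¹) = 1 := by
  have e : (ga 0 * gb 3 * ga 1 * (gb 4)⁻¹) = ((ga 0 * gb 3 * ga 1 * (gb 4)⁻¹)) := by decide
  rw [e]; exact (hr12)
lemma e33 : μ (ga 0 * gb 4 * (ga 4)⁻¹ * gb 3) = 1 := by
  have e : (ga 0 * gb 4 * (ga 4)⁻¹ * gb 3) = ((ga 0 * gb 4 * (ga 4)⁻¹ * gb 3)) := by decide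
  rw [e]; exact (hr13)
lemma e34 : μ (ga 0 * (gb 4)⁻¹ * ga 2 * (gb 3)⁻¹) = 1 := by
  have e : (ga 0 * (gb 4)⁻¹ * ga 2 * (gb 3)⁻¹) = ((ga 0 * (gb 4)⁻¹ * ga 2 * (gb 3)⁻¹)) := by decide
  rw [e]; exact (hr14)
lemma e35 : μ (ga 0 * (gb 3)⁻¹ * ga 2 * gb 4) = 1 := by
  have e : (ga 0 * (gb 3)⁻¹ * ga 2 * gb 4) = ((ga 0 * (gb 3)⁻¹ * ga 2 * gb 4)) := by decide
  rw [e]; exact (hr15)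
lemma e36 : μ (ga 1 * gb 3 * (ga 1)⁻¹ * gb 4) = 1 := by
  have e : (ga 1 * gb 3 * (ga 1)⁻¹ * gb 4) = ((ga 1 * gb 3 * (ga 1)⁻¹ * gb 4)) := by decide
  rw [e]; exact (hr16)
lemma e37 : μ (ga 1 * gb 4 * ga 3 * (gb 3)⁻¹) = 1 := by
  have e : (ga 1 * gb 4 * ga 3 * (gb 3)⁻¹) = ((ga 1 * gb 4 * ga 3 * (gb 3)⁻¹)) := by decide
  rw [e]; exact (hr17)
lemma e38 : μ (ga 2 * gb 3 * ga 3 * gb 4) = 1 := by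
  have e : (ga 2 * gb 3 * ga 3 * gb 4) = ((ga 2 * gb 3 * ga 3 * gb 4)) := by decide
  rw [e]; exact (hr18)
lemma e39 : μ (ga 2 * (gb 4)⁻¹ * ga 3 * gb 3) = 1 := by
  have e : (ga 2 * (gb 4)⁻¹ * ga 3 * gb 3) = ((ga 2 * (gb 4)⁻¹ * ga 3 * gb 3)) := by decide
  rw [e]; exact (hr19)
lemma e41 : μ (ga 4 * gb 0 * (ga 4)⁻¹ * gb 2) = 1 := by
  have e : (ga 4 * gb 0 * (ga 4)⁻¹ * gb 2) = ((ga 4 * gb 0 * (ga 4)⁻¹ * gb 2)) := by decide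
  rw [e]; exact (hr21)
lemma e42 : μ (ga 4 * gb 1 * (ga 4)⁻¹ * (gb 4)⁻¹) = 1 := by
  have e : (ga 4 * gb 1 * (ga 4)⁻¹ * (gb 4)⁻¹) = ((ga 4 * gb 1 * (ga 4)⁻¹ * (gb 4)⁻¹)) := by decide
  rw [e]; exact (hr22)
lemma e45 : μ (ga 1 * (ga 0)⁻¹ * ga 2 * (ga 3)⁻¹) = 1 := by
  have e : (ga 1 * (ga 0)⁻¹ * ga 2 * (ga 3)⁻¹) = ((ga 1 * (ga 0)⁻¹ * ga 2 * (ga 3)⁻¹)) := by decide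
  rw [e]; exact (hr25)
lemma e46 : μ (gb 0 * (ga 1)⁻¹ * (gb 1)⁻¹ * ga 0) = 1 := by
  have e : (gb 0 * (ga 1)⁻¹ * (gb 1)⁻¹ * ga 0) = ((ga 0)⁻¹ * (ga 0 * gb 0 * (ga 1)⁻¹ * (gb 1)⁻¹) * ((ga 0)⁻¹)⁻¹) := by decide
  rw [e]; exact conj1 ((ga 0)⁻¹) (e20)
lemma e48 : μ (gb 1 * (ga 0)⁻¹ * (gb 0)⁻¹ * ga 0) = 1 := by
  have e : (gb 1 * (ga 0)⁻¹ * (gb 0)⁻¹ * ga 0) = ((ga 0)⁻¹ * (ga 0 * gb 1 * (ga 0)⁻¹ * (gb 0)⁻¹) * ((ga 0)⁻¹)⁻¹) := by decide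
  rw [e]; exact conj1 ((ga 0)⁻¹) (e21)
lemma e49 : μ (ga 0 * gb 1 * (ga 0)⁻¹ * (gb 0)⁻¹) = 1 := by
  have e : (ga 0 * gb 1 * (ga 0)⁻¹ * (gb 0)⁻¹) = ((ga 0 * gb 1 * (ga 0)⁻¹ * (gb 0)⁻¹)) := by decide
  rw [e]; exact (e21)
lemma e52 : μ ((gb 2)⁻¹ * (ga 1)⁻¹ * gb 1 * ga 0) = 1 := by
  have e : ((gb 2)⁻¹ * (ga 1)⁻¹ * gb 1 * ga 0) = ((ga 0)⁻¹ * (ga 0 * (gb 2)⁻¹ * (ga 1)⁻¹ * gb 1) * ((ga 0)⁻¹)⁻¹) := by decide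
  rw [e]; exact conj1 ((ga 0)⁻¹) (e23)
lemma e58 : μ (gb 0 * (ga 3)⁻¹ * (gb 1)⁻¹ * ga 2) = 1 := by
  have e : (gb 0 * (ga 3)⁻¹ * (gb 1)⁻¹ * ga 2) = ((ga 2)⁻¹ * (ga 2 * gb 0 * (ga 3)⁻¹ * (gb 1)⁻¹) * ((ga 2)⁻¹)⁻¹) := by decide
  rw [e]; exact conj1 ((ga 2)⁻¹) (e26)
lemma e60 : μ (gb 1 * (ga 2)⁻¹ * (gb 0)⁻¹ * ga 2) = 1 := by
  have e : (gb 1 * (ga 2)⁻¹ * (gb 0)⁻¹ * ga 2) = ((ga 2)⁻¹ * (ga 2 * gb 1 * (ga 2)⁻¹ * (gb 0)⁻¹) * ((ga 2)⁻¹)⁻¹) := by decide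
  rw [e]; exact conj1 ((ga 2)⁻¹) (e27)
lemma e64 : μ ((gb 2)⁻¹ * (ga 3)⁻¹ * gb 1 * ga 2) = 1 := by
  have e : ((gb 2)⁻¹ * (ga 3)⁻¹ * gb 1 * ga 2) = ((ga 2)⁻¹ * (ga 2 * (gb 2)⁻¹ * (ga 3)⁻¹ * gb 1) * ((ga 2)⁻¹)⁻¹) := by decide
  rw [e]; exact conj1 ((ga 2)⁻¹) (e29)
lemma e66 : μ ((gb 0)⁻¹ * (ga 3)⁻¹ * gb 2 * ga 2) = 1 := by
  have e : ((gb 0)⁻¹ * (ga 3)⁻¹ * gb 2 * ga 2) = ((ga 2)⁻¹ * (ga 2 * (gb 0)⁻¹ * (ga 3)⁻¹ * gb 2) * ((ga 2)⁻¹)⁻¹) := by decide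
  rw [e]; exact conj1 ((ga 2)⁻¹) (e30)
lemma e70 : μ (gb 3 * ga 1 * (gb 4)⁻¹ * ga 0) = 1 := by
  have e : (gb 3 * ga 1 * (gb 4)⁻¹ * ga 0) = ((ga 0)⁻¹ * (ga 0 * gb 3 * ga 1 * (gb 4)⁻¹) * ((ga 0)⁻¹)⁻¹) := by decide
  rw [e]; exact conj1 ((ga 0)⁻¹) (e32)
lemma e71 : μ (ga 0 * gb 3 * ga 1 * (gb 4)⁻¹) = 1 := by
  have e : (ga 0 * gb 3 * ga 1 * (gb 4)⁻¹) = ((ga 0 * gb 3 * ga 1 * (gb 4)⁻¹)) := by decide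
  rw [e]; exact (e32)
lemma e72 : μ (gb 4 * (ga 4)⁻¹ * gb 3 * ga 0) = 1 := by
  have e : (gb 4 * (ga 4)⁻¹ * gb 3 * ga 0) = ((ga 0)⁻¹ * (ga 0 * gb 4 * (ga 4)⁻¹ * gb 3) * ((ga 0)⁻¹)⁻¹) := by decide
  rw [e]; exact conj1 ((ga 0)⁻¹) (e33)
lemma e73 : μ (ga 0 * gb 4 * (ga 4)⁻¹ * gb 3) = 1 := by
  have e : (ga 0 * gb 4 * (ga 4)⁻¹ * gb 3) = ((ga 0 * gb 4 * (ga 4)⁻¹ * gb 3)) := by decide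
  rw [e]; exact (e33)
lemma e74 : μ ((gb 4)⁻¹ * ga 2 * (gb 3)⁻¹ * ga 0) = 1 := by
  have e : ((gb 4)⁻¹ * ga 2 * (gb 3)⁻¹ * ga 0) = ((ga 0)⁻¹ * (ga 0 * (gb 4)⁻¹ * ga 2 * (gb 3)⁻¹) * ((ga 0)⁻¹)⁻¹) := by decide
  rw [e]; exact conj1 ((ga 0)⁻¹) (e34)
lemma e76 : μ ((gb 3)⁻¹ * ga 2 * gb 4 * ga 0) = 1 := by
  have e : ((gb 3)⁻¹ * ga 2 * gb 4 * ga 0) = ((ga 0)⁻¹ * (ga 0 * (gb 3)⁻¹ * ga 2 * gb 4) * ((ga 0)⁻¹)⁻¹) := by decide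
  rw [e]; exact conj1 ((ga 0)⁻¹) (e35)
lemma e78 : μ (gb 3 * (ga 1)⁻¹ * gb 4 * ga 1) = 1 := by
  have e : (gb 3 * (ga 1)⁻¹ * gb 4 * ga 1) = ((ga 1)⁻¹ * (ga 1 * gb 3 * (ga 1)⁻¹ * gb 4) * ((ga 1)⁻¹)⁻¹) := by decide
  rw [e]; exact conj1 ((ga 1)⁻¹) (e36)
lemma e81 : μ (ga 1 * gb 4 * ga 3 * (gb 3)⁻¹) = 1 := by
  have e : (ga 1 * gb 4 * ga 3 * (gb 3)⁻¹) = ((ga 1 * gb 4 * ga 3 * (gb 3)⁻¹)) := by decide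
  rw [e]; exact (e37)
lemma e82 : μ (gb 3 * ga 3 * gb 4 * ga 2) = 1 := by
  have e : (gb 3 * ga 3 * gb 4 * ga 2) = ((ga 2)⁻¹ * (ga 2 * gb 3 * ga 3 * gb 4) * ((ga 2)⁻¹)⁻¹) := by decide
  rw [e]; exact conj1 ((ga 2)⁻¹) (e38)
lemma e85 : μ (ga 2 * (gb 4)⁻¹ * ga 3 * gb 3) = 1 := by
  have e : (ga 2 * (gb 4)⁻¹ * ga 3 * gb 3) = ((ga 2 * (gb 4)⁻¹ * ga 3 * gb 3)) := by decide
  rw [e]; exact (e39)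
lemma e89 : μ (ga 4 * gb 0 * (ga 4)⁻¹ * gb 2) = 1 := by
  have e : (ga 4 * gb 0 * (ga 4)⁻¹ * gb 2) = ((ga 4 * gb 0 * (ga 4)⁻¹ * gb 2)) := by decide
  rw [e]; exact (e41)
lemma e90 : μ (gb 1 * (ga 4)⁻¹ * (gb 4)⁻¹ * ga 4) = 1 := by
  have e : (gb 1 * (ga 4)⁻¹ * (gb 4)⁻¹ * ga 4) = ((ga 4)⁻¹ * (ga 4 * gb 1 * (ga 4)⁻¹ * (gb 4)⁻¹) * ((ga 4)⁻¹)⁻¹) := by decide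
  rw [e]; exact conj1 ((ga 4)⁻¹) (e42)
lemma e91 : μ (ga 4 * gb 1 * (ga 4)⁻¹ * (gb 4)⁻¹) = 1 := by
  have e : (ga 4 * gb 1 * (ga 4)⁻¹ * (gb 4)⁻¹) = ((ga 4 * gb 1 * (ga 4)⁻¹ * (gb 4)⁻¹)) := by decide
  rw [e]; exact (e42)
lemma e96 : μ ((ga 0)⁻¹ * ga 2 * (ga 3)⁻¹ * ga 1) = 1 := by
  have e : ((ga 0)⁻¹ * ga 2 * (ga 3)⁻¹ * ga 1) = ((ga 1)⁻¹ * (ga 1 * (ga 0)⁻¹ * ga 2 * (ga 3)⁻¹) * ((ga 1)⁻¹)⁻¹) := by decide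
  rw [e]; exact conj1 ((ga 1)⁻¹) (e45)
lemma e97 : μ (ga 1 * (ga 0)⁻¹ * ga 2 * (ga 3)⁻¹) = 1 := by
  have e : (ga 1 * (ga 0)⁻¹ * ga 2 * (ga 3)⁻¹) = ((ga 1 * (ga 0)⁻¹ * ga 2 * (ga 3)⁻¹)) := by decide
  rw [e]; exact (e45)
lemma e98 : μ ((ga 1)⁻¹ * (gb 1)⁻¹ * ga 0 * gb 0) = 1 := by
  have e : ((ga 1)⁻¹ * (gb 1)⁻¹ * ga 0 * gb 0) = ((gb 0)⁻¹ * (gb 0 * (ga 1)⁻¹ * (gb 1)⁻¹ * ga 0) * ((gb 0)⁻¹)⁻¹) := by decide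
  rw [e]; exact conj1 ((gb 0)⁻¹) (e46)
lemma e101 : μ (gb 1 * (ga 0)⁻¹ * (gb 0)⁻¹ * ga 0) = 1 := by
  have e : (gb 1 * (ga 0)⁻¹ * (gb 0)⁻¹ * ga 0) = ((gb 1 * (ga 0)⁻¹ * (gb 0)⁻¹ * ga 0)) := by decide
  rw [e]; exact (e48)
lemma e102 : μ ((gb 1)⁻¹ * (ga 0)⁻¹ * gb 0 * ga 0) = 1 := by
  have e : ((gb 1)⁻¹ * (ga 0)⁻¹ * gb 0 * ga 0) = ((gb 1)⁻¹ * (gb 1 * (ga 0)⁻¹ * (gb 0)⁻¹ * ga 0)⁻¹ * ((gb 1)⁻¹)⁻¹) := by decide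
  rw [e]; exact conj1 ((gb 1)⁻¹) (inv1 e48)
lemma e103 : μ (gb 0 * ga 0 * (gb 1)⁻¹ * (ga 0)⁻¹) = 1 := by
  have e : (gb 0 * ga 0 * (gb 1)⁻¹ * (ga 0)⁻¹) = ((ga 0 * gb 1 * (ga 0)⁻¹ * (gb 0)⁻¹)⁻¹) := by decide
  rw [e]; exact (inv1 e49)
lemma e108 : μ (gb 2 * (ga 0)⁻¹ * (gb 1)⁻¹ * ga 1) = 1 := by
  have e : (gb 2 * (ga 0)⁻¹ * (gb 1)⁻¹ * ga 1) = (gb 2 * ((gb 2)⁻¹ * (ga 1)⁻¹ * gb 1 * ga 0)⁻¹ * (gb 2)⁻¹) := by decide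
  rw [e]; exact conj1 (gb 2) (inv1 e52)
lemma e116 : μ ((ga 3)⁻¹ * (gb 1)⁻¹ * ga 2 * gb 0) = 1 := by
  have e : ((ga 3)⁻¹ * (gb 1)⁻¹ * ga 2 * gb 0) = ((gb 0)⁻¹ * (gb 0 * (ga 3)⁻¹ * (gb 1)⁻¹ * ga 2) * ((gb 0)⁻¹)⁻¹) := by decide
  rw [e]; exact conj1 ((gb 0)⁻¹) (e58)
lemma e120 : μ ((gb 1)⁻¹ * (ga 2)⁻¹ * gb 0 * ga 2) = 1 := by
  have e : ((gb 1)⁻¹ * (ga 2)⁻¹ * gb 0 * ga 2) = ((gb 1)⁻¹ * (gb 1 * (ga 2)⁻¹ * (gb 0)⁻¹ * ga 2)⁻¹ * ((gb 1)⁻¹)⁻¹) := by decide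
  rw [e]; exact conj1 ((gb 1)⁻¹) (inv1 e60)
lemma e126 : μ (gb 2 * (ga 2)⁻¹ * (gb 1)⁻¹ * ga 3) = 1 := by
  have e : (gb 2 * (ga 2)⁻¹ * (gb 1)⁻¹ * ga 3) = (gb 2 * ((gb 2)⁻¹ * (ga 3)⁻¹ * gb 1 * ga 2)⁻¹ * (gb 2)⁻¹) := by decide
  rw [e]; exact conj1 (gb 2) (inv1 e64)
lemma e128 : μ ((ga 3)⁻¹ * gb 2 * ga 2 * (gb 0)⁻¹) = 1 := by
  have e : ((ga 3)⁻¹ * gb 2 * ga 2 * (gb 0)⁻¹) = (gb 0 * ((gb 0)⁻¹ * (ga 3)⁻¹ * gb 2 * ga 2) * (gb 0)⁻¹) := by decide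
  rw [e]; exact conj1 (gb 0) (e66)
lemma e134 : μ ((gb 3)⁻¹ * (ga 0)⁻¹ * gb 4 * (ga 1)⁻¹) = 1 := by
  have e : ((gb 3)⁻¹ * (ga 0)⁻¹ * gb 4 * (ga 1)⁻¹) = ((gb 3)⁻¹ * (gb 3 * ga 1 * (gb 4)⁻¹ * ga 0)⁻¹ * ((gb 3)⁻¹)⁻¹) := by decide
  rw [e]; exact conj1 ((gb 3)⁻¹) (inv1 e70)
lemma e136 : μ (gb 4 * (ga 1)⁻¹ * (gb 3)⁻¹ * (ga 0)⁻¹) = 1 := by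
  have e : (gb 4 * (ga 1)⁻¹ * (gb 3)⁻¹ * (ga 0)⁻¹) = ((ga 0 * gb 3 * ga 1 * (gb 4)⁻¹)⁻¹) := by decide
  rw [e]; exact (inv1 e71)
lemma e138 : μ ((gb 4)⁻¹ * (ga 0)⁻¹ * (gb 3)⁻¹ * ga 4) = 1 := by
  have e : ((gb 4)⁻¹ * (ga 0)⁻¹ * (gb 3)⁻¹ * ga 4) = ((gb 4)⁻¹ * (gb 4 * (ga 4)⁻¹ * gb 3 * ga 0)⁻¹ * ((gb 4)⁻¹)⁻¹) := by decide
  rw [e]; exact conj1 ((gb 4)⁻¹) (inv1 e72)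
lemma e139 : μ ((gb 3)⁻¹ * ga 4 * (gb 4)⁻¹ * (ga 0)⁻¹) = 1 := by
  have e : ((gb 3)⁻¹ * ga 4 * (gb 4)⁻¹ * (ga 0)⁻¹) = ((ga 0 * gb 4 * (ga 4)⁻¹ * gb 3)⁻¹) := by decide
  rw [e]; exact (inv1 e73)
lemma e140 : μ ((gb 4)⁻¹ * ga 2 * (gb 3)⁻¹ * ga 0) = 1 := by
  have e : ((gb 4)⁻¹ * ga 2 * (gb 3)⁻¹ * ga 0) = (((gb 4)⁻¹ * ga 2 * (gb 3)⁻¹ * ga 0)) := by decide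
  rw [e]; exact (e74)
lemma e143 : μ (gb 3 * (ga 0)⁻¹ * (gb 4)⁻¹ * (ga 2)⁻¹) = 1 := by
  have e : (gb 3 * (ga 0)⁻¹ * (gb 4)⁻¹ * (ga 2)⁻¹) = (gb 3 * ((gb 3)⁻¹ * ga 2 * gb 4 * ga 0)⁻¹ * (gb 3)⁻¹) := by decide
  rw [e]; exact conj1 (gb 3) (inv1 e76)
lemma e144 : μ ((gb 3)⁻¹ * ga 2 * gb 4 * ga 0) = 1 := by
  have e : ((gb 3)⁻¹ * ga 2 * gb 4 * ga 0) = (((gb 3)⁻¹ * ga 2 * gb 4 * ga 0)) := by decide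
  rw [e]; exact (e76)
lemma e146 : μ ((gb 3)⁻¹ * (ga 1)⁻¹ * (gb 4)⁻¹ * ga 1) = 1 := by
  have e : ((gb 3)⁻¹ * (ga 1)⁻¹ * (gb 4)⁻¹ * ga 1) = ((gb 3)⁻¹ * (gb 3 * (ga 1)⁻¹ * gb 4 * ga 1)⁻¹ * ((gb 3)⁻¹)⁻¹) := by decide
  rw [e]; exact conj1 ((gb 3)⁻¹) (inv1 e78)
lemma e147 : μ (gb 3 * (ga 1)⁻¹ * gb 4 * ga 1) = 1 := by
  have e : (gb 3 * (ga 1)⁻¹ * gb 4 * ga 1) = ((gb 3 * (ga 1)⁻¹ * gb 4 * ga 1)) := by decide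
  rw [e]; exact (e78)
lemma e151 : μ (gb 3 * (ga 3)⁻¹ * (gb 4)⁻¹ * (ga 1)⁻¹) = 1 := by
  have e : (gb 3 * (ga 3)⁻¹ * (gb 4)⁻¹ * (ga 1)⁻¹) = ((ga 1 * gb 4 * ga 3 * (gb 3)⁻¹)⁻¹) := by decide
  rw [e]; exact (inv1 e81)
lemma e152 : μ ((gb 3)⁻¹ * (ga 2)⁻¹ * (gb 4)⁻¹ * (ga 3)⁻¹) = 1 := by
  have e : ((gb 3)⁻¹ * (ga 2)⁻¹ * (gb 4)⁻¹ * (ga 3)⁻¹) = ((gb 3)⁻¹ * (gb 3 * ga 3 * gb 4 * ga 2)⁻¹ * ((gb 3)⁻¹)⁻¹) := by decide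
  rw [e]; exact conj1 ((gb 3)⁻¹) (inv1 e82)
lemma e157 : μ ((gb 3)⁻¹ * (ga 3)⁻¹ * gb 4 * (ga 2)⁻¹) = 1 := by
  have e : ((gb 3)⁻¹ * (ga 3)⁻¹ * gb 4 * (ga 2)⁻¹) = ((ga 2 * (gb 4)⁻¹ * ga 3 * gb 3)⁻¹) := by decide
  rw [e]; exact (inv1 e85)
lemma e165 : μ (gb 1 * (ga 4)⁻¹ * (gb 4)⁻¹ * ga 4) = 1 := by
  have e : (gb 1 * (ga 4)⁻¹ * (gb 4)⁻¹ * ga 4) = ((gb 1 * (ga 4)⁻¹ * (gb 4)⁻¹ * ga 4)) := by decide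
  rw [e]; exact (e90)
lemma e166 : μ (gb 4 * ga 4 * (gb 1)⁻¹ * (ga 4)⁻¹) = 1 := by
  have e : (gb 4 * ga 4 * (gb 1)⁻¹ * (ga 4)⁻¹) = ((ga 4 * gb 1 * (ga 4)⁻¹ * (gb 4)⁻¹)⁻¹) := by decide
  rw [e]; exact (inv1 e91)
lemma e173 : μ (ga 2 * (ga 3)⁻¹ * ga 1 * (ga 0)⁻¹) = 1 := by
  have e : (ga 2 * (ga 3)⁻¹ * ga 1 * (ga 0)⁻¹) = (ga 0 * ((ga 0)⁻¹ * ga 2 * (ga 3)⁻¹ * ga 1) * (ga 0)⁻¹) := by decide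
  rw [e]; exact conj1 (ga 0) (e96)
lemma e175 : μ (ga 3 * (ga 2)⁻¹ * ga 0 * (ga 1)⁻¹) = 1 := by
  have e : (ga 3 * (ga 2)⁻¹ * ga 0 * (ga 1)⁻¹) = ((ga 1 * (ga 0)⁻¹ * ga 2 * (ga 3)⁻¹)⁻¹) := by decide
  rw [e]; exact (inv1 e97)
lemma e177 : μ ((gb 0)⁻¹ * (ga 0)⁻¹ * gb 1 * ga 1) = 1 := by
  have e : ((gb 0)⁻¹ * (ga 0)⁻¹ * gb 1 * ga 1) = (((ga 1)⁻¹ * (gb 1)⁻¹ * ga 0 * gb 0)⁻¹) := by decide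
  rw [e]; exact (inv1 e98)
lemma e191 : μ (ga 3 * (gb 0)⁻¹ * (ga 2)⁻¹ * gb 1) = 1 := by
  have e : (ga 3 * (gb 0)⁻¹ * (ga 2)⁻¹ * gb 1) = (ga 3 * ((ga 3)⁻¹ * (gb 1)⁻¹ * ga 2 * gb 0)⁻¹ * (ga 3)⁻¹) := by decide
  rw [e]; exact conj1 (ga 3) (inv1 e116)
lemma e194 : μ ((ga 2)⁻¹ * (gb 0)⁻¹ * ga 2 * gb 1) = 1 := by
  have e : ((ga 2)⁻¹ * (gb 0)⁻¹ * ga 2 * gb 1) = (((gb 1)⁻¹ * (ga 2)⁻¹ * gb 0 * ga 2)⁻¹) := by decide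
  rw [e]; exact (inv1 e120)
lemma e198 : μ ((ga 3)⁻¹ * gb 1 * ga 2 * (gb 2)⁻¹) = 1 := by
  have e : ((ga 3)⁻¹ * gb 1 * ga 2 * (gb 2)⁻¹) = ((gb 2 * (ga 2)⁻¹ * (gb 1)⁻¹ * ga 3)⁻¹) := by decide
  rw [e]; exact (inv1 e126)
lemma e200 : μ (ga 3 * gb 0 * (ga 2)⁻¹ * (gb 2)⁻¹) = 1 := by
  have e : (ga 3 * gb 0 * (ga 2)⁻¹ * (gb 2)⁻¹) = (ga 3 * ((ga 3)⁻¹ * gb 2 * ga 2 * (gb 0)⁻¹)⁻¹ * (ga 3)⁻¹) := by decide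
  rw [e]; exact conj1 (ga 3) (inv1 e128)
lemma e205 : μ (ga 1 * (gb 4)⁻¹ * ga 0 * gb 3) = 1 := by
  have e : (ga 1 * (gb 4)⁻¹ * ga 0 * gb 3) = (((gb 3)⁻¹ * (ga 0)⁻¹ * gb 4 * (ga 1)⁻¹)⁻¹) := by decide
  rw [e]; exact (inv1 e134)
lemma e206 : μ ((gb 4)⁻¹ * ga 0 * gb 3 * ga 1) = 1 := by
  have e : ((gb 4)⁻¹ * ga 0 * gb 3 * ga 1) = ((gb 4)⁻¹ * (gb 4 * (ga 1)⁻¹ * (gb 3)⁻¹ * (ga 0)⁻¹)⁻¹ * ((gb 4)⁻¹)⁻¹) := by decide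
  rw [e]; exact conj1 ((gb 4)⁻¹) (inv1 e136)
lemma e211 : μ (ga 2 * gb 4 * ga 0 * (gb 3)⁻¹) = 1 := by
  have e : (ga 2 * gb 4 * ga 0 * (gb 3)⁻¹) = ((gb 3 * (ga 0)⁻¹ * (gb 4)⁻¹ * (ga 2)⁻¹)⁻¹) := by decide
  rw [e]; exact (inv1 e143)
lemma e217 : μ (ga 3 * gb 4 * ga 2 * gb 3) = 1 := by
  have e : (ga 3 * gb 4 * ga 2 * gb 3) = (((gb 3)⁻¹ * (ga 2)⁻¹ * (gb 4)⁻¹ * (ga 3)⁻¹)⁻¹) := by decide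
  rw [e]; exact (inv1 e152)
lemma e240 : μ ((gb 1)⁻¹ * ga 2 * gb 0 * (ga 3)⁻¹) = 1 := by
  have e : ((gb 1)⁻¹ * ga 2 * gb 0 * (ga 3)⁻¹) = ((ga 3 * (gb 0)⁻¹ * (ga 2)⁻¹ * gb 1)⁻¹) := by decide
  rw [e]; exact (inv1 e191)
lemma e243 : μ (gb 1 * ga 2 * (gb 2)⁻¹ * (ga 3)⁻¹) = 1 := by
  have e : (gb 1 * ga 2 * (gb 2)⁻¹ * (ga 3)⁻¹) = (ga 3 * ((ga 3)⁻¹ * gb 1 * ga 2 * (gb 2)⁻¹) * (ga 3)⁻¹) := by decide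
  rw [e]; exact conj1 (ga 3) (e198)
lemma e244 : μ (gb 2 * ga 2 * (gb 0)⁻¹ * (ga 3)⁻¹) = 1 := by
  have e : (gb 2 * ga 2 * (gb 0)⁻¹ * (ga 3)⁻¹) = ((ga 3 * gb 0 * (ga 2)⁻¹ * (gb 2)⁻¹)⁻¹) := by decide
  rw [e]; exact (inv1 e200)
lemma e246 : μ ((gb 4)⁻¹ * ga 0 * gb 3 * ga 1) = 1 := by
  have e : ((gb 4)⁻¹ * ga 0 * gb 3 * ga 1) = ((ga 1)⁻¹ * (ga 1 * (gb 4)⁻¹ * ga 0 * gb 3) * ((ga 1)⁻¹)⁻¹) := by decide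
  rw [e]; exact conj1 ((ga 1)⁻¹) (e205)
lemma e249 : μ (gb 4 * ga 0 * (gb 3)⁻¹ * ga 2) = 1 := by
  have e : (gb 4 * ga 0 * (gb 3)⁻¹ * ga 2) = ((ga 2)⁻¹ * (ga 2 * gb 4 * ga 0 * (gb 3)⁻¹) * ((ga 2)⁻¹)⁻¹) := by decide
  rw [e]; exact conj1 ((ga 2)⁻¹) (e211)
lemma e488 : μ ((ga 1)⁻¹ * (ga 1)⁻¹ * (ga 1)⁻¹ * ga 0) = 1 := by
  have e : ((ga 1)⁻¹ * (ga 1)⁻¹ * (ga 1)⁻¹ * ga 0) = ((ga 1)⁻¹ * ((gb 3)⁻¹ * (ga 1)⁻¹ * (gb 4)⁻¹ * ga 1)⁻¹ * ((ga 1)⁻¹)⁻¹) * (((gb 4)⁻¹ * ga 0 * gb 3 * ga 1)⁻¹) * ((gb 4)⁻¹ * (ga 2 * (ga 3)⁻¹ * ga 1 * (ga 0)⁻¹)⁻¹ * ((gb 4)⁻¹)⁻¹) * (((gb 4)⁻¹ * ga 2 * (gb 3)⁻¹ * ga 0)) * ((ga 0)⁻¹ * (gb 3 * (ga 3)⁻¹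 * (gb 4)⁻¹ * (ga 1)⁻¹) * ((ga 0)⁻¹)⁻¹) := by decide
  rw [e]; exact mul1 (mul1 (mul1 (mul1 (conj1 ((ga 1)⁻¹) (inv1 e146)) ((inv1 e246))) (conj1 ((gb 4)⁻¹) (inv1 e173))) ((e140))) (conj1 ((ga 0)⁻¹) (e151))
lemma e567 : μ ((ga 1)⁻¹ * (ga 1)⁻¹ * (ga 1)⁻¹ * ga 0) = 1 := by
  have e : ((ga 1)⁻¹ * (ga 1)⁻¹ * (ga 1)⁻¹ * ga 0) = (((gb 4)⁻¹ * ga 0 * gb 3 * ga 1)⁻¹) * ((gb 4)⁻¹ * ga 0 * (gb 3 * (ga 1)⁻¹ * gb 4 * ga 1) * ((gb 4)⁻¹ * ga 0)⁻¹) * (((gb 4)⁻¹ * ga 0 * gb 3 * ga 1)) * ((ga 1)⁻¹ * ((gb 3)⁻¹ * (ga 1)⁻¹ * (gb 4)⁻¹ * ga 1) * ((ga 1)⁻¹)⁻¹) * (((ga 1)⁻¹ * (ga 1)⁻¹ * (ga 1)⁻¹ * ga 0)) := by decide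
  rw [e]; exact mul1 (mul1 (mul1 (mul1 ((inv1 e206)) (conj1 ((gb 4)⁻¹ * ga 0) (e147))) ((e246))) (conj1 ((ga 1)⁻¹) (e146))) ((e488))
lemma e568 : μ (ga 1 * (ga 0)⁻¹ * ga 1 * ga 1) = 1 := by
  have e : (ga 1 * (ga 0)⁻¹ * ga 1 * ga 1) = (ga 1 * ((ga 1)⁻¹ * (ga 1)⁻¹ * (ga 1)⁻¹ * ga 0)⁻¹ * (ga 1)⁻¹) := by decide
  rw [e]; exact conj1 (ga 1) (inv1 e567)
lemma e570 : μ (ga 1 * (ga 0)⁻¹ * (ga 1)⁻¹ * ga 0) = 1 := by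
  have e : (ga 1 * (ga 0)⁻¹ * (ga 1)⁻¹ * ga 0) = ((ga 1 * (ga 0)⁻¹ * ga 1 * ga 1)) * (((ga 1)⁻¹ * (ga 1)⁻¹ * (ga 1)⁻¹ * ga 0)) := by decide
  rw [e]; exact mul1 ((e568)) ((e567))
lemma e580 : μ (ga 2 * ga 0) = 1 := by
  have e : (ga 2 * ga 0) = (((gb 3)⁻¹ * (ga 3)⁻¹ * gb 4 * (ga 2)⁻¹)⁻¹) * ((ga 3 * gb 4 * ga 2 * gb 3)⁻¹) * (ga 3 * gb 4 * (ga 2 * (ga 3)⁻¹ * ga 1 * (ga 0)⁻¹) * (ga 3 * gb 4)⁻¹) * (ga 3 * (gb 4 * ga 0 * (gb 3)⁻¹ * ga 2) * (ga 3)⁻¹) * ((ga 3 * (ga 2)⁻¹ * ga 0 * (ga 1)⁻¹)) * ((ga 1 * (ga 0)⁻¹ * (ga 1)⁻¹ * ga 0)) * ((ga 0)⁻¹ * ga 1 * (gb 3 * (ga 1)⁻¹ * gb 4 * ga 1) * ((ga 0)⁻¹ * ga 1)⁻¹) := by decide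
  rw [e]; exact mul1 (mul1 (mul1 (mul1 (mul1 (mul1 ((inv1 e157)) ((inv1 e217))) (conj1 (ga 3 * gb 4) (e173))) (conj1 (ga 3) (e249))) ((e175))) ((e570))) (conj1 ((ga 0)⁻¹ * ga 1) (e147))
lemma e582 : μ (ga 2 * ga 0) = 1 := by
  have e : (ga 2 * ga 0) = ((ga 2 * ga 0)) := by decide
  rw [e]; exact (e580)
lemma e583 : μ ((ga 0)⁻¹ * (ga 2)⁻¹) = 1 := by
  have e : ((ga 0)⁻¹ * (ga 2)⁻¹) = ((ga 2 * ga 0)⁻¹) * (((1 : FreeGroup Gen))) := by decide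
  rw [e]; exact mul1 ((inv1 e582)) ((e4))
lemma e585 : μ ((ga 2)⁻¹ * (ga 0)⁻¹) = 1 := by
  have e : ((ga 2)⁻¹ * (ga 0)⁻¹) = (ga 0 * ((ga 0)⁻¹ * (ga 2)⁻¹) * (ga 0)⁻¹) := by decide
  rw [e]; exact conj1 (ga 0) (e583)
lemma e589 : μ ((ga 4)⁻¹ * ga 0) = 1 := by
  have e : ((ga 4)⁻¹ * ga 0) = (((gb 4)⁻¹ * (ga 0)⁻¹ * (gb 3)⁻¹ * ga 4)⁻¹) * ((gb 4)⁻¹ * (ga 2 * ga 0)⁻¹ * ((gb 4)⁻¹)⁻¹) * (((gb 4)⁻¹ * ga 2 * (gb 3)⁻¹ * ga 0)) := by decide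
  rw [e]; exact mul1 (mul1 ((inv1 e138)) (conj1 ((gb 4)⁻¹) (inv1 e582))) ((e140))
lemma e590 : μ (ga 1 * ga 0) = 1 := by
  have e : (ga 1 * ga 0) = (((gb 3)⁻¹ * (ga 0)⁻¹ * gb 4 * (ga 1)⁻¹)⁻¹) * ((gb 3)⁻¹ * (ga 2 * ga 0)⁻¹ * ((gb 3)⁻¹)⁻¹) * (((gb 3)⁻¹ * ga 2 * gb 4 * ga 0)) := by decide
  rw [e]; exact mul1 (mul1 ((inv1 e134)) (conj1 ((gb 3)⁻¹) (inv1 e582))) ((e144))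
lemma e592 : μ (ga 0 * (gb 0)⁻¹ * (ga 0)⁻¹ * gb 1) = 1 := by
  have e : (ga 0 * (gb 0)⁻¹ * (ga 0)⁻¹ * gb 1) = (ga 0 * (gb 0)⁻¹ * (ga 2 * ga 0)⁻¹ * (ga 0 * (gb 0)⁻¹)⁻¹) * (((ga 2)⁻¹ * (ga 0)⁻¹)⁻¹) * (((ga 2)⁻¹ * (gb 0)⁻¹ * ga 2 * gb 1)) := by decide
  rw [e]; exact mul1 (mul1 (conj1 (ga 0 * (gb 0)⁻¹) (inv1 e582)) ((inv1 e585))) ((e194))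
lemma e593 : μ (ga 3 * ga 0) = 1 := by
  have e : (ga 3 * ga 0) = (((gb 1)⁻¹ * ga 2 * gb 0 * (ga 3)⁻¹)⁻¹) * ((gb 1)⁻¹ * (ga 2 * ga 0) * ((gb 1)⁻¹)⁻¹) * (((gb 1)⁻¹ * (ga 0)⁻¹ * gb 0 * ga 0)) := by decide
  rw [e]; exact mul1 (mul1 ((inv1 e240)) (conj1 ((gb 1)⁻¹) (e582))) ((e102))
lemma e596 : μ (ga 3 * gb 2 * (gb 0)⁻¹ * ga 0) = 1 := by
  have e : (ga 3 * gb 2 * (gb 0)⁻¹ * ga 0) = ((gb 1 * ga 2 * (gb 2)⁻¹ * (ga 3)⁻¹)⁻¹) * (gb 1 * (ga 2 * ga 0) * (gb 1)⁻¹) * ((gb 1 * (ga 0)⁻¹ * (gb 0)⁻¹ * ga 0)) := by decide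
  rw [e]; exact mul1 (mul1 ((inv1 e243)) (conj1 (gb 1) (e582))) ((e101))
lemma e597 : μ (ga 3 * gb 0 * (gb 1)⁻¹ * ga 1) = 1 := by
  have e : (ga 3 * gb 0 * (gb 1)⁻¹ * ga 1) = ((gb 2 * ga 2 * (gb 0)⁻¹ * (ga 3)⁻¹)⁻¹) * (gb 2 * (ga 2 * ga 0) * (gb 2)⁻¹) * ((gb 2 * (ga 0)⁻¹ * (gb 1)⁻¹ * ga 1)) := by decide
  rw [e]; exact mul1 (mul1 ((inv1 e244)) (conj1 (gb 2) (e582))) ((e108))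
lemma e624 : μ ((ga 4)⁻¹ * ga 0) = 1 := by
  have e : ((ga 4)⁻¹ * ga 0) = (((ga 4)⁻¹ * ga 0)) := by decide
  rw [e]; exact (e589)
lemma e625 : μ (ga 4 * (ga 0)⁻¹) = 1 := by
  have e : (ga 4 * (ga 0)⁻¹) = (ga 4 * ((ga 4)⁻¹ * ga 0)⁻¹ * (ga 4)⁻¹) * (((1 : FreeGroup Gen))) := by decide
  rw [e]; exact mul1 (conj1 (ga 4) (inv1 e624)) ((e8))
lemma e627 : μ (ga 4 * (ga 0)⁻¹) = 1 := by
  have e : (ga 4 * (ga 0)⁻¹) = ((ga 4 * (ga 0)⁻¹)) := by decide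
  rw [e]; exact (e625)
lemma e629 : μ (ga 1 * ga 0) = 1 := by
  have e : (ga 1 * ga 0) = ((ga 1 * ga 0)) := by decide
  rw [e]; exact (e590)
lemma e630 : μ ((ga 0)⁻¹ * (ga 1)⁻¹) = 1 := by
  have e : ((ga 0)⁻¹ * (ga 1)⁻¹) = ((ga 1 * ga 0)⁻¹) * (((1 : FreeGroup Gen))) := by decide
  rw [e]; exact mul1 ((inv1 e629)) ((e2))
lemma e631 : μ ((ga 1)⁻¹ * (ga 0)⁻¹) = 1 := by
  have e : ((ga 1)⁻¹ * (ga 0)⁻¹) = (ga 0 * ((ga 0)⁻¹ * (ga 1)⁻¹) * (ga 0)⁻¹) := by decide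
  rw [e]; exact conj1 (ga 0) (e630)
lemma e635 : μ (ga 0 * ga 0) = 1 := by
  have e : (ga 0 * ga 0) = (ga 0 * ((ga 1)⁻¹ * (ga 0)⁻¹)⁻¹ * (ga 0)⁻¹) * (ga 0 * ((gb 0)⁻¹ * (ga 0)⁻¹ * gb 1 * ga 1)⁻¹ * (ga 0)⁻¹) * ((ga 0 * (gb 0)⁻¹ * (ga 0)⁻¹ * gb 1)) := by decide
  rw [e]; exact mul1 (mul1 (conj1 (ga 0) (inv1 e631)) (conj1 (ga 0) (inv1 e177))) ((e592))
lemma e636 : μ ((ga 0)⁻¹ * (ga 0)⁻¹) = 1 := by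
  have e : ((ga 0)⁻¹ * (ga 0)⁻¹) = ((ga 0 * ga 0)⁻¹) := by decide
  rw [e]; exact (inv1 e635)
lemma e638 : μ (ga 3 * (ga 0)⁻¹) = 1 := by
  have e : (ga 3 * (ga 0)⁻¹) = ((ga 3 * ga 0)) * (((ga 0)⁻¹ * (ga 0)⁻¹)) := by decide
  rw [e]; exact mul1 ((e593)) ((e636))
lemma e639 : μ (ga 0 * (ga 3)⁻¹) = 1 := by
  have e : (ga 0 * (ga 3)⁻¹) = ((ga 3 * (ga 0)⁻¹)⁻¹) * (((1 : FreeGroup Gen))) := by decide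
  rw [e]; exact mul1 ((inv1 e638)) ((e6))
lemma e641 : μ ((ga 3)⁻¹ * (ga 0)⁻¹) = 1 := by
  have e : ((ga 3)⁻¹ * (ga 0)⁻¹) = ((ga 0 * ga 0)⁻¹) * (ga 0 * (ga 0 * (ga 3)⁻¹) * (ga 0)⁻¹) := by decide
  rw [e]; exact mul1 ((inv1 e635)) (conj1 (ga 0) (e639))
lemma e642 : μ (gb 2 * (gb 0)⁻¹) = 1 := by
  have e : (gb 2 * (gb 0)⁻¹) = ((ga 3)⁻¹ * (ga 3 * gb 2 * (gb 0)⁻¹ * ga 0) * ((ga 3)⁻¹)⁻¹) * (((ga 3)⁻¹ * (ga 0)⁻¹)) * (ga 0 * ((ga 0)⁻¹ * (ga 0)⁻¹) * (ga 0)⁻¹) * ((ga 0 * ga 0)) := by decide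
  rw [e]; exact mul1 (mul1 (mul1 (conj1 ((ga 3)⁻¹) (e596)) ((e641))) (conj1 (ga 0) (e636))) ((e635))
lemma e643 : μ (gb 0 * (gb 2)⁻¹) = 1 := by
  have e : (gb 0 * (gb 2)⁻¹) = ((gb 2 * (gb 0)⁻¹)⁻¹) * (((1 : FreeGroup Gen))) := by decide
  rw [e]; exact mul1 ((inv1 e642)) ((e14))
lemma e645 : μ ((gb 2)⁻¹ * gb 0) = 1 := by
  have e : ((gb 2)⁻¹ * gb 0) = ((gb 0)⁻¹ * (gb 0 * (gb 2)⁻¹) * ((gb 0)⁻¹)⁻¹) := by decide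
  rw [e]; exact conj1 ((gb 0)⁻¹) (e643)
lemma e646 : μ (gb 1 * (gb 0)⁻¹) = 1 := by
  have e : (gb 1 * (gb 0)⁻¹) = ((ga 0 * ga 0)⁻¹) * (ga 0 * ((ga 1)⁻¹ * (ga 0)⁻¹)⁻¹ * (ga 0)⁻¹) * (((ga 3)⁻¹ * (ga 0)⁻¹)⁻¹) * ((ga 3)⁻¹ * (ga 3 * gb 0 * (gb 1)⁻¹ * ga 1)⁻¹ * ((ga 3)⁻¹)⁻¹) := by decide
  rw [e]; exact mul1 (mul1 (mul1 ((inv1 e635)) (conj1 (ga 0) (inv1 e631))) ((inv1 e641))) (conj1 ((ga 3)⁻¹) (inv1 e597))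
lemma e650 : μ ((gb 0)⁻¹ * (gb 0)⁻¹) = 1 := by
  have e : ((gb 0)⁻¹ * (gb 0)⁻¹) = (((gb 2)⁻¹ * gb 0)⁻¹) * ((ga 4 * gb 0 * (ga 4)⁻¹ * gb 2)⁻¹) * ((ga 4 * (ga 0)⁻¹)) * (ga 0 * gb 0 * ((ga 4)⁻¹ * ga 0) * (ga 0 * gb 0)⁻¹) * (ga 0 * gb 0 * ((ga 0)⁻¹ * (ga 0)⁻¹) * (ga 0 * gb 0)⁻¹) * (ga 0 * (gb 0 * ga 0 * (gb 1)⁻¹ * (ga 0)⁻¹) * (ga 0)⁻¹) * ((ga 0 * ga 0)) * ((gb 1 * (gb 0)⁻¹)) := by decide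
  rw [e]; exact mul1 (mul1 (mul1 (mul1 (mul1 (mul1 (mul1 ((inv1 e645)) ((inv1 e89))) ((e627))) (conj1 (ga 0 * gb 0) (e624))) (conj1 (ga 0 * gb 0) (e636))) (conj1 (ga 0) (e103))) ((e635))) ((e646))
lemma e651 : μ (gb 0 * gb 0) = 1 := by
  have e : (gb 0 * gb 0) = (gb 0 * ((gb 0)⁻¹ * (gb 0)⁻¹)⁻¹ * (gb 0)⁻¹) * (((1 : FreeGroup Gen))) := by decide
  rw [e]; exact mul1 (conj1 (gb 0) (inv1 e650)) ((e10))
lemma e654 : μ (ga 0 * gb 4 * (gb 0)⁻¹ * (ga 0)⁻¹) = 1 := by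
  have e : (ga 0 * gb 4 * (gb 0)⁻¹ * (ga 0)⁻¹) = (((ga 0)⁻¹ * (ga 0)⁻¹)⁻¹) * (((ga 4)⁻¹ * ga 0)⁻¹) * ((gb 1 * (ga 4)⁻¹ * (gb 4)⁻¹ * ga 4)⁻¹) * ((gb 1 * (gb 0)⁻¹)) * (gb 0 * ((ga 4)⁻¹ * ga 0) * (gb 0)⁻¹) * (gb 0 * ((ga 0)⁻¹ * (ga 0)⁻¹) * (gb 0)⁻¹) * ((gb 0 * ga 0 * (gb 1)⁻¹ * (ga 0)⁻¹)) * (ga 0 * (gb 1 * (gb 0)⁻¹) * (ga 0)⁻¹) := by decide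
  rw [e]; exact mul1 (mul1 (mul1 (mul1 (mul1 (mul1 (mul1 ((inv1 e636)) ((inv1 e624))) ((inv1 e165))) ((e646))) (conj1 (gb 0) (e624))) (conj1 (gb 0) (e636))) ((e103))) (conj1 (ga 0) (e646))
lemma e655 : μ ((gb 3)⁻¹ * (gb 0)⁻¹) = 1 := by
  have e : ((gb 3)⁻¹ * (gb 0)⁻¹) = ((gb 3)⁻¹ * (ga 4 * (ga 0)⁻¹)⁻¹ * ((gb 3)⁻¹)⁻¹) * (((gb 3)⁻¹ * ga 4 * (gb 4)⁻¹ * (ga 0)⁻¹)) * ((ga 0 * gb 4 * (gb 0)⁻¹ * (ga 0)⁻¹)) * (ga 0 * gb 0 * ((ga 0)⁻¹ * (ga 0)⁻¹) * (ga 0 * gb 0)⁻¹) * (ga 0 * (gb 0 * ga 0 * (gb 1)⁻¹ * (ga 0)⁻¹) * (ga 0)⁻¹) * ((ga 0 * ga 0)) * ((gb 1 * (gb 0)⁻¹)) := by decide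
  rw [e]; exact mul1 (mul1 (mul1 (mul1 (mul1 (mul1 (conj1 ((gb 3)⁻¹) (inv1 e625)) ((e139))) ((e654))) (conj1 (ga 0 * gb 0) (e636))) (conj1 (ga 0) (e103))) ((e635))) ((e646))
lemma e656 : μ (gb 3 * gb 0) = 1 := by
  have e : (gb 3 * gb 0) = (gb 3 * ((gb 3)⁻¹ * (gb 0)⁻¹)⁻¹ * (gb 3)⁻¹) * (((1 : FreeGroup Gen))) := by decide
  rw [e]; exact mul1 (conj1 (gb 3) (inv1 e655)) ((e16))
lemma e658 : μ (gb 3 * (gb 0)⁻¹) = 1 := by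
  have e : (gb 3 * (gb 0)⁻¹) = (gb 3 * (gb 0 * gb 0)⁻¹ * (gb 3)⁻¹) * ((gb 3 * gb 0)) := by decide
  rw [e]; exact mul1 (conj1 (gb 3) (inv1 e651)) ((e656))
lemma e659 : μ (gb 4 * (gb 0)⁻¹) = 1 := by
  have e : (gb 4 * (gb 0)⁻¹) = (gb 4 * (ga 4 * (ga 0)⁻¹)⁻¹ * (gb 4)⁻¹) * ((gb 4 * ga 4 * (gb 1)⁻¹ * (ga 4)⁻¹)) * ((ga 4 * (ga 0)⁻¹)) * (ga 0 * (gb 1 * (gb 0)⁻¹) * (ga 0)⁻¹) * (ga 0 * gb 0 * ((ga 0)⁻¹ * (ga 0)⁻¹) * (ga 0 * gb 0)⁻¹) * (ga 0 * (gb 0 * ga 0 * (gb 1)⁻¹ * (ga 0)⁻¹) * (ga 0)⁻¹) * ((ga 0 * ga 0)) * ((gb 1 * (gb 0)⁻¹)) := by decide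
  rw [e]; exact mul1 (mul1 (mul1 (mul1 (mul1 (mul1 (mul1 (conj1 (gb 4) (inv1 e625)) ((e166))) ((e627))) (conj1 (ga 0) (e646))) (conj1 (ga 0 * gb 0) (e636))) (conj1 (ga 0) (e103))) ((e635))) ((e646))
lemma tha2 : μ (ga 1 * (ga 0)⁻¹) = 1 := by
  have e : (ga 1 * (ga 0)⁻¹) = ((ga 1 * ga 0)) * (((ga 0)⁻¹ * (ga 0)⁻¹)) * (ga 0 * ((ga 0)⁻¹ * (ga 0)⁻¹) * (ga 0)⁻¹) * ((ga 0 * ga 0)) := by decide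
  rw [e]; exact mul1 (mul1 (mul1 ((e629)) ((e636))) (conj1 (ga 0) (e636))) ((e635))
lemma tha3 : μ (ga 2 * (ga 0)⁻¹) = 1 := by
  have e : (ga 2 * (ga 0)⁻¹) = ((ga 2 * ga 0)) * (((ga 0)⁻¹ * (ga 0)⁻¹)) * (ga 0 * ((ga 0)⁻¹ * (ga 0)⁻¹) * (ga 0)⁻¹) * ((ga 0 * ga 0)) := by decide
  rw [e]; exact mul1 (mul1 (mul1 ((e582)) ((e636))) (conj1 (ga 0) (e636))) ((e635))
lemma tha4 : μ (ga 3 * (ga 0)⁻¹) = 1 := by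
  have e : (ga 3 * (ga 0)⁻¹) = ((ga 3 * (ga 0)⁻¹)) * (ga 0 * ((ga 0)⁻¹ * (ga 0)⁻¹) * (ga 0)⁻¹) * ((ga 0 * ga 0)) := by decide
  rw [e]; exact mul1 (mul1 ((e638)) (conj1 (ga 0) (e636))) ((e635))
lemma tha5 : μ (ga 4 * (ga 0)⁻¹) = 1 := by
  have e : (ga 4 * (ga 0)⁻¹) = ((ga 4 * (ga 0)⁻¹)) * (ga 0 * ((ga 0)⁻¹ * (ga 0)⁻¹) * (ga 0)⁻¹) * ((ga 0 * ga 0)) := by decide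
  rw [e]; exact mul1 (mul1 ((e627)) (conj1 (ga 0) (e636))) ((e635))
lemma thb2 : μ (gb 1 * (gb 0)⁻¹) = 1 := by
  have e : (gb 1 * (gb 0)⁻¹) = ((gb 1 * (gb 0)⁻¹)) * (gb 0 * ((gb 0)⁻¹ * (gb 0)⁻¹) * (gb 0)⁻¹) * ((gb 0 * gb 0)) := by decide
  rw [e]; exact mul1 (mul1 ((e646)) (conj1 (gb 0) (e650))) ((e651))
lemma thb3 : μ (gb 2 * (gb 0)⁻¹) = 1 := by
  have e : (gb 2 * (gb 0)⁻¹) = ((gb 2 * (gb 0)⁻¹)) * (gb 0 * ((gb 0)⁻¹ * (gb 0)⁻¹) * (gb 0)⁻¹) * ((gb 0 * gb 0)) := by decide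
  rw [e]; exact mul1 (mul1 ((e642)) (conj1 (gb 0) (e650))) ((e651))
lemma thb4 : μ (gb 3 * (gb 0)⁻¹) = 1 := by
  have e : (gb 3 * (gb 0)⁻¹) = ((gb 3 * (gb 0)⁻¹)) * (gb 0 * ((gb 0)⁻¹ * (gb 0)⁻¹) * (gb 0)⁻¹) * ((gb 0 * gb 0)) := by decide
  rw [e]; exact mul1 (mul1 ((e658)) (conj1 (gb 0) (e650))) ((e651))
lemma thb5 : μ (gb 4 * (gb 0)⁻¹) = 1 := by
  have e : (gb 4 * (gb 0)⁻¹) = ((gb 4 * (gb 0)⁻¹)) * (gb 0 * ((gb 0)⁻¹ * (gb 0)⁻¹) * (gb 0)⁻¹) * ((gb 0 * gb 0)) := by decide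
  rw [e]; exact mul1 (mul1 ((e659)) (conj1 (gb 0) (e650))) ((e651))
lemma thasq : μ (ga 0 * ga 0) = 1 := by
  have e : (ga 0 * ga 0) = ((ga 0 * ga 0)) := by decide
  rw [e]; exact (e635)
lemma thbsq : μ (gb 0 * gb 0) = 1 := by
  have e : (gb 0 * gb 0) = ((gb 0 * gb 0)) := by decide
  rw [e]; exact (e651)
lemma thcomm : μ (ga 0 * gb 0 * (ga 0)⁻¹ * (gb 0)⁻¹) = 1 := by
  have e : (ga 0 * gb 0 * (ga 0)⁻¹ * (gb 0)⁻¹) = (ga 0 * gb 0 * ((ga 0)⁻¹ * (ga 0)⁻¹) * (ga 0 * gb 0)⁻¹) * (ga 0 * (gb 0 * ga 0 * (gb 1)⁻¹ * (ga 0)⁻¹) * (ga 0)⁻¹) * ((ga 0 * ga 0)) * ((gb 1 * (gb 0)⁻¹)) * (gb 0 * ((gb 0)⁻¹ * (gb 0)⁻¹) * (gb 0)⁻¹) * ((gb 0 * gb 0)) := by decide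
  rw [e]; exact mul1 (mul1 (mul1 (mul1 (mul1 (conj1 (ga 0 * gb 0) (e636)) (conj1 (ga 0) (e103))) ((e635))) ((e646))) (conj1 (gb 0) (e650))) ((e651))
/-! Consequences in the quotient. -/

local notation "α" => μ (ga 0)
local notation "β" => μ (gb 0)

lemma ha_eq (i : Fin 5) : μ (ga i) = α := by
  fin_cases i
  · rfl
  · have := tha2; rw [map_mul, map_inv] at this
    exact eq_of_div_eq_one (by rw [div_eq_mul_inv]; exact this)
  · have := tha3; rw [map_mul, map_inv] at this
    exact eq_of_div_eq_one (by rw [div_eq_mul_inv]; exact this)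
  · have := tha4; rw [map_mul, map_inv] at this
    exact eq_of_div_eq_one (by rw [div_eq_mul_inv]; exact this)
  · have := tha5; rw [map_mul, map_inv] at this
    exact eq_of_div_eq_one (by rw [div_eq_mul_inv]; exact this)

lemma hb_eq (i : Fin 5) : μ (gb i) = β := by
  fin_cases i
  · rfl
  · have := thb2; rw [map_mul, map_inv] at this
    exact eq_of_div_eq_one (by rw [div_eq_mul_inv]; exact this)
  · have := thb3; rw [map_mul, map_inv] at this
    exact eq_of_div_eq_one (by rw [div_eq_mul_inv]; exact this)
  · have := thb4; rw [map_mul, map_inv] at this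
    exact eq_of_div_eq_one (by rw [div_eq_mul_inv]; exact this)
  · have := thb5; rw [map_mul, map_inv] at this
    exact eq_of_div_eq_one (by rw [div_eq_mul_inv]; exact this)

lemma hA : α * α = 1 := by have := thasq; rwa [map_mul] at this
lemma hB : β * β = 1 := by have := thbsq; rwa [map_mul] at this
lemma hBA : β * α = α * β := by
  have := thcomm
  rw [map_mul, map_mul, map_mul, map_inv, map_inv] at this
  have h2 : α * β = (α * β * α⁻¹ * β⁻¹) * (β * α) := by group
  rw [this, one_mul] at h2
  exact h2.symm

lemma sA : ∀ x, α * (α * x) = x := fun x => by rw [← mul_assoc, hA, one_mul]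
lemma sB : ∀ x, β * (β * x) = x := fun x => by rw [← mul_assoc, hB, one_mul]
lemma sBA : ∀ x, β * (α * x) = α * (β * x) := fun x => by
  rw [← mul_assoc, hBA, mul_assoc]

/-- The four-element candidate set. -/
def S : Set (G ⧸ N) := {1, α, β, α * β}

lemma S_mul {x y : G ⧸ N} (hx : x ∈ S) (hy : y ∈ S) : x * y ∈ S := by
  simp only [S, Set.mem_insert_iff, Set.mem_singleton_iff] at hx hy ⊢
  rcases hx with rfl|rfl|rfl|rfl <;> rcases hy with rfl|rfl|rfl|rfl <;>
    (try simp only [one_mul, mul_one, mul_assoc, hA, hB, hBA, sBA, sA, sB]) <;> tauto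

lemma S_inv {x : G ⧸ N} (hx : x ∈ S) : x⁻¹ ∈ S := by
  simp only [S, Set.mem_insert_iff, Set.mem_singleton_iff] at hx ⊢
  rcases hx with rfl|rfl|rfl|rfl
  · simp
  · refine Or.inr (Or.inl ?_); rw [inv_eq_iff_mul_eq_one, hA]
  · refine Or.inr (Or.inr (Or.inl ?_)); rw [inv_eq_iff_mul_eq_one, hB]
  · refine Or.inr (Or.inr (Or.inr ?_))
    rw [inv_eq_iff_mul_eq_one, mul_assoc, ← mul_assoc β, hBA, mul_assoc, hB, mul_one, hA]

lemma mem_S (q : G ⧸ N) : q ∈ S := by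
  obtain ⟨g, rfl⟩ := QuotientGroup.mk'_surjective N q
  induction g using PresentedGroup.induction_on with | H z =>
  show μ z ∈ S
  induction z using FreeGroup.induction_on with
  | C1 => exact Or.inl (map_one μ)
  | of x =>
      cases x with
      | a i => exact (ha_eq i) ▸ Or.inr (Or.inl rfl)
      | b i => exact (hb_eq i) ▸ Or.inr (Or.inr (Or.inl rfl))
  | inv_of x hx => rw [map_inv]; exact S_inv hx
  | mul x y hx hy => rw [map_mul]; exact S_mul hx hy

lemma phi_w : φ w = 1 := by
  simp only [w, γa, map_mul, map_inv, φ, PresentedGroup.toGroup.of]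
  decide

lemma N_le_ker : N ≤ Λ := by
  haveI : (Λ).Normal := φ.normal_ker
  refine Subgroup.normalClosure_le_normal ?_
  intro x hx
  rw [Set.mem_singleton_iff] at hx
  subst hx
  exact phi_w

/-- The induced map on the quotient. -/
def φ' : G ⧸ N →* Multiplicative (ZMod 2 × ZMod 2) :=
  QuotientGroup.lift N φ fun x hx => N_le_ker hx

lemma phi'_mk (g : G) : φ' ((QuotientGroup.mk' N) g) = φ g := rfl

lemma phi'_alpha : φ' α = Multiplicative.ofAdd (1, 0) := by
  show φ' ((QuotientGroup.mk' N) (γa 0)) = _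
  rw [phi'_mk]
  simp [γa, φ, PresentedGroup.toGroup.of, fgen]

lemma phi'_beta : φ' β = Multiplicative.ofAdd (0, 1) := by
  show φ' ((QuotientGroup.mk' N) (γb 0)) = _
  rw [phi'_mk]
  simp [γb, φ, PresentedGroup.toGroup.of, fgen]

lemma ker_le_N : Λ ≤ N := by
  intro g hg
  have hg1 : φ g = 1 := hg
  have hq : φ' ((QuotientGroup.mk' N) g) = 1 := by
    rw [phi'_mk]; exact hg1
  have hS := mem_S ((QuotientGroup.mk' N) g)
  have hone : (QuotientGroup.mk' N) g = 1 := by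
    rcases hS with h|h|h|h
    · exact h
    · rw [h, phi'_alpha] at hq; exact absurd hq (by decide)
    · rw [h, phi'_beta] at hq; exact absurd hq (by decide)
    · rw [h, map_mul, phi'_alpha, phi'_beta] at hq; exact absurd hq (by decide)
  exact (QuotientGroup.eq_one_iff g).1 hone

end NC1

/-- The normal closure of w in Γ₁ equals Λ₁. -/
theorem normalClosure_w_eq_lambda1 : Subgroup.normalClosure {w} = Λ :=
  le_antisymm NC1.N_le_ker NC1.ker_le_N
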